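/- Let μ be a finite positive Radon measure on E satisfying Hypothesis 2.2 and let ρ ∈ BV(H,H₁) be nonnegative. Suppose (‖dρ‖, σ_ρ) and (‖dρ‖′, σ_ρ′) are two pairs, each consisting of a positive finite Borel measure on E and a Borel map E → H₁* of H₁*-norm one a.e. with respect to the corresponding measure, both satisfying ∫_E D*G(z) ρ(z) μ(dz) = ∫_E {}_{H₁}⟨G(z), σ(z)⟩_{H₁*} m(dz) for all G ∈ (𝓕C_b¹)_{Q^{1/2}(H)∩H₁}. Then ‖dρ‖ = ‖dρ‖′ and σ_ρ(z) = σ_ρ′(z) for ‖dρ‖-a.e. z. -/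

import Mathlib

/-!
Testing the representation formula with the fields `G = g e_j` (for which `D*G` exists by
integration by parts against the logarithmic derivative along `e_j ∈ Q^{1/2}(H)`) shows that the
real measures `σ_j ‖dρ‖` and `σ'_j ‖dρ‖'` agree on all cylinder functions. These determine finite
measures, since `cos ∘ l` and `sin ∘ l` are cylinder functions and characteristic functionals
determine finite measures on a separable Banach space. Writing `p, q` for the densities of `‖dρ‖`
and `‖dρ‖'` with respect to their sum, this gives `p σ = q σ'` a.e.; taking `H₁*`-norms yields
`p = q`, hence `‖dρ‖ = ‖dρ‖'` and `σ = σ'` wherever `p ≠ 0`.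
-/

open MeasureTheory Filter
open scoped RealInnerProductSpace ENNReal

noncomputable section

/-- The class `𝓕C_b¹` of `C¹` cylinder functions
`u z = f (l₁ z, …, l_m z)` with `f ∈ C_b¹(ℝ^m)`. -/
def FCb1 (E : Type*) [NormedAddCommGroup E] [NormedSpace ℝ E] : Set (E → ℝ) :=
  {u | ∃ (m : ℕ) (l : Fin m → (E →L[ℝ] ℝ)) (f : (Fin m → ℝ) → ℝ),
      ContDiff ℝ 1 f ∧ (∃ C, ∀ x, |f x| ≤ C) ∧ (∃ C, ∀ x, ‖fderiv ℝ f x‖ ≤ C) ∧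
      ∀ z, u z = f fun i => l i z}

/-- Directional derivative `∂u/∂v (z) = (d/ds) u (z + s v) |_{s = 0}`. -/
def dirDeriv {E : Type*} [NormedAddCommGroup E] [NormedSpace ℝ E]
    (u : E → ℝ) (v : E) (z : E) : ℝ :=
  deriv (fun s : ℝ => u (z + s • v)) 0

/-- `β` is (a version of) the logarithmic derivative of `μ` along `v`, i.e. `μ` is
Fomin-differentiable along `v` with `d_v μ = β ⬝ μ` (a finite signed measure `≪ μ`). -/
def IsLogDeriv {E : Type*} [NormedAddCommGroup E] [NormedSpace ℝ E] [MeasurableSpace E]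
    (μ : Measure E) (v : E) (β : E → ℝ) : Prop :=
  Integrable β μ ∧ ∀ φ ∈ FCb1 E, ∫ z, dirDeriv φ v z ∂μ = -∫ z, φ z * β z ∂μ

/-- `v ∈ H(μ)` : `μ` is Fomin-differentiable along `v` with square-integrable
logarithmic derivative. -/
def MemHmu {E : Type*} [NormedAddCommGroup E] [NormedSpace ℝ E] [MeasurableSpace E]
    (μ : Measure E) (v : E) : Prop :=
  ∃ β : E → ℝ, IsLogDeriv μ v β ∧ MemLp β 2 μ

/-- Hypothesis 2.2: `Q` is a bounded symmetric nonnegative operator on `H` with nonnegative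
symmetric square root `sqrtQ`, `Q^{1/2}(H) ⊆ H(μ)` (with chosen logarithmic derivatives
`β h ∈ L²(μ)` for `h ∈ Q^{1/2}(H)`), and there is an orthonormal basis `e : ℕ → H` of `H`
consisting of elements of `E*` which are eigenvectors of `Q` with eigenvalues `lam j > 0`.
Here `ι : H →L[ℝ] E` is the embedding of `H` into `E`. -/
structure Hyp22 {E H : Type*} [NormedAddCommGroup E] [NormedSpace ℝ E] [MeasurableSpace E]
    [NormedAddCommGroup H] [InnerProductSpace ℝ H]
    (μ : Measure E) (ι : H →L[ℝ] E) (Q sqrtQ : H →L[ℝ] H)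
    (e : ℕ → H) (lam : ℕ → ℝ) (β : H → E → ℝ) : Prop where
  Q_symm : ∀ x y : H, ⟪Q x, y⟫ = ⟪x, Q y⟫
  Q_nonneg : ∀ x : H, 0 ≤ ⟪Q x, x⟫
  sqrtQ_symm : ∀ x y : H, ⟪sqrtQ x, y⟫ = ⟪x, sqrtQ y⟫
  sqrtQ_nonneg : ∀ x : H, 0 ≤ ⟪sqrtQ x, x⟫
  sqrtQ_sq : ∀ x : H, sqrtQ (sqrtQ x) = Q x
  ortho : Orthonormal ℝ e
  total : (Submodule.span ℝ (Set.range e)).topologicalClosure = ⊤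
  basis_in_dual : ∀ j : ℕ, ∃ l : E →L[ℝ] ℝ, ∀ h : H, ⟪e j, h⟫ = l (ι h)
  lam_pos : ∀ j, 0 < lam j
  eigen : ∀ j, Q (e j) = lam j • e j
  logDeriv : ∀ h ∈ Set.range sqrtQ, IsLogDeriv μ (ι h) (β h)
  logDeriv_L2 : ∀ h ∈ Set.range sqrtQ, MemLp (β h) 2 μ

/-- `x ∈ H₁`, where `H₁ = {x ∈ H : ∑ c_j² ⟨x,e_j⟩² < ∞}`. -/
def memH1 {H : Type*} [NormedAddCommGroup H] [InnerProductSpace ℝ H]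
    (c : ℕ → ℝ) (e : ℕ → H) (x : H) : Prop :=
  Summable fun j => (c j) ^ 2 * ⟪x, e j⟫ ^ 2

/-- The square of the `H₁`-norm, `‖x‖_{H₁}² = ∑ c_j² ⟨x,e_j⟩²`. -/
def normH1sq {H : Type*} [NormedAddCommGroup H] [InnerProductSpace ℝ H]
    (c : ℕ → ℝ) (e : ℕ → H) (x : H) : ℝ :=
  ∑' j, (c j) ^ 2 * ⟪x, e j⟫ ^ 2

/-- The `H₁`-inner product `⟨x,y⟩_{H₁} = ∑ c_j² ⟨x,e_j⟩⟨y,e_j⟩`. -/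
def innerH1 {H : Type*} [NormedAddCommGroup H] [InnerProductSpace ℝ H]
    (c : ℕ → ℝ) (e : ℕ → H) (x y : H) : ℝ :=
  ∑' j, (c j) ^ 2 * (⟪x, e j⟫ * ⟪y, e j⟫)

/-- The squared `H₁*`-norm of an element of `H₁*` given by its coefficients `b j`
with respect to the orthonormal basis `{c_j e_j}` of `H₁*`. -/
def normH1starSq (b : ℕ → ℝ) : ℝ := ∑' j, (b j) ^ 2

/-- The dual pairing `_{H₁}⟨x, σ⟩_{H₁*}` of `x ∈ H₁` with the element `σ ∈ H₁*` whose
coefficients with respect to the orthonormal basis `{c_j e_j}` of `H₁*` are `b j`;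
since the pairing extends the inner product of `H`, it equals `∑ b_j c_j ⟨x, e_j⟩`. -/
def pairH1 {H : Type*} [NormedAddCommGroup H] [InnerProductSpace ℝ H]
    (c : ℕ → ℝ) (e : ℕ → H) (x : H) (b : ℕ → ℝ) : ℝ :=
  ∑' j, b j * (c j * ⟪x, e j⟫)

/-- `ψ` is a version of `D*G` for the vector field `G z = ∑ j, g j z • lv j`, i.e.
`∫ ψ f dμ = ∫ ⟨G, Df⟩ dμ` for all `f ∈ 𝓕C_b¹` (note `⟨G z, Df z⟩ = ∑ j g_j(z) ∂f/∂(lv j)(z)`). -/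
def IsDstar {E H : Type*} [NormedAddCommGroup E] [NormedSpace ℝ E] [MeasurableSpace E]
    [NormedAddCommGroup H] [InnerProductSpace ℝ H]
    (μ : Measure E) (ι : H →L[ℝ] E) {m : ℕ}
    (g : Fin m → E → ℝ) (lv : Fin m → H) (ψ : E → ℝ) : Prop :=
  Integrable ψ μ ∧
    ∀ f ∈ FCb1 E, ∫ z, ψ z * f z ∂μ = ∫ z, ∑ j, g j z * dirDeriv f (ι (lv j)) z ∂μ

/-- The set of numbers `∫ D*G ρ dμ` over test vector fields
`G ∈ (𝓕C_b¹)_{Q^{1/2}(H)∩H₁}` with `‖G(z)‖_{H₁} ≤ 1` for all `z`. -/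
def Vset {E H : Type*} [NormedAddCommGroup E] [NormedSpace ℝ E] [MeasurableSpace E]
    [NormedAddCommGroup H] [InnerProductSpace ℝ H]
    (μ : Measure E) (ι : H →L[ℝ] E) (sqrtQ : H →L[ℝ] H) (c : ℕ → ℝ) (e : ℕ → H)
    (ρ : E → ℝ) : Set ℝ :=
  {r | ∃ (m : ℕ) (g : Fin m → E → ℝ) (lv : Fin m → H) (ψ : E → ℝ),
      (∀ j, g j ∈ FCb1 E) ∧ (∀ j, lv j ∈ Set.range sqrtQ) ∧ (∀ j, memH1 c e (lv j)) ∧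
      (∀ z, normH1sq c e (∑ j, g j z • lv j) ≤ 1) ∧
      IsDstar μ ι g lv ψ ∧ r = ∫ z, ψ z * ρ z ∂μ}

/-- `V(ρ)`, the total variation of `ρ`. -/
def Vtotal {E H : Type*} [NormedAddCommGroup E] [NormedSpace ℝ E] [MeasurableSpace E]
    [NormedAddCommGroup H] [InnerProductSpace ℝ H]
    (μ : Measure E) (ι : H →L[ℝ] E) (sqrtQ : H →L[ℝ] H) (c : ℕ → ℝ) (e : ℕ → H)
    (ρ : E → ℝ) : ℝ :=
  sSup (Vset μ ι sqrtQ c e ρ)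

/-- `ρ ∈ BV(H, H₁)` : `ρ ∈ L²(E,μ)` and `V(ρ) < ∞`. -/
def IsBV {E H : Type*} [NormedAddCommGroup E] [NormedSpace ℝ E] [MeasurableSpace E]
    [NormedAddCommGroup H] [InnerProductSpace ℝ H]
    (μ : Measure E) (ι : H →L[ℝ] E) (sqrtQ : H →L[ℝ] H) (c : ℕ → ℝ) (e : ℕ → H)
    (ρ : E → ℝ) : Prop :=
  MemLp ρ 2 μ ∧ BddAbove (Vset μ ι sqrtQ c e ρ)

/-- `ρ ∈ BV_l(E)` (with `v ∈ E` the direction corresponding to `l ∈ E*`):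
`|∫ ∂u/∂l ρ dμ| ≤ C ‖u‖_∞` for all `u ∈ 𝓕C_b¹`. -/
def IsBVl {E : Type*} [NormedAddCommGroup E] [NormedSpace ℝ E] [MeasurableSpace E]
    (μ : Measure E) (v : E) (ρ : E → ℝ) : Prop :=
  ∃ C > 0, ∀ u ∈ FCb1 E, ∀ M : ℝ, (∀ z, |u z| ≤ M) →
    |∫ z, dirDeriv u v z * ρ z ∂μ| ≤ C * M

/-- Integral of `f` against a signed measure, via the Jordan decomposition. -/
def sintegral {E : Type*} [MeasurableSpace E] (ν : SignedMeasure E) (f : E → ℝ) : ℝ :=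
  (∫ z, f z ∂ν.toJordanDecomposition.posPart) - ∫ z, f z ∂ν.toJordanDecomposition.negPart

/-- The topological support of a measure. -/
def msupport {E : Type*} [TopologicalSpace E] [MeasurableSpace E] (ν : Measure E) : Set E :=
  {x | ∀ U : Set E, IsOpen U → x ∈ U → 0 < ν U}

/-- The `L²(μ)`-norm. -/
def L2norm {E : Type*} [MeasurableSpace E] (μ : Measure E) (f : E → ℝ) : ℝ :=
  Real.sqrt (∫ z, (f z) ^ 2 ∂μ)

section BoundedC1

variable {F G : Type*} [NormedAddCommGroup F] [NormedSpace ℝ F]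
  [NormedAddCommGroup G] [NormedSpace ℝ G]

def BoundedC1 (f : F → ℝ) : Prop :=
  ContDiff ℝ 1 f ∧ (∃ C, ∀ x, |f x| ≤ C) ∧ ∃ C, ∀ x, ‖fderiv ℝ f x‖ ≤ C

lemma BoundedC1.comp_clm {f : F → ℝ} (hf : BoundedC1 f) (A : G →L[ℝ] F) :
    BoundedC1 (f ∘ A) := by
  obtain ⟨hf, ⟨C, hC⟩, ⟨C', hC'⟩⟩ := hf
  refine ⟨hf.comp A.contDiff, ⟨C, fun x => hC (A x)⟩, ⟨C' * ‖A‖, fun x => ?_⟩⟩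
  rw [fderiv_comp x (hf.differentiable one_ne_zero _) A.differentiableAt, A.fderiv]
  exact ((fderiv ℝ f (A x)).opNorm_comp_le A).trans (by gcongr; exact hC' _)

lemma BoundedC1.mul {f g : F → ℝ} (hf : BoundedC1 f) (hg : BoundedC1 g) :
    BoundedC1 (fun x => f x * g x) := by
  obtain ⟨hf, ⟨Cf, hCf⟩, ⟨Cf', hCf'⟩⟩ := hf
  obtain ⟨hg, ⟨Cg, hCg⟩, ⟨Cg', hCg'⟩⟩ := hg
  have hCf0 : 0 ≤ Cf := (abs_nonneg _).trans (hCf 0)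
  have hCg0 : 0 ≤ Cg := (abs_nonneg _).trans (hCg 0)
  refine ⟨hf.mul hg, ⟨Cf * Cg, fun x => ?_⟩, ⟨Cf * Cg' + Cg * Cf', fun x => ?_⟩⟩
  · rw [abs_mul]
    exact mul_le_mul (hCf x) (hCg x) (abs_nonneg _) hCf0
  · rw [fderiv_fun_mul (hf.differentiable one_ne_zero x) (hg.differentiable one_ne_zero x)]
    refine (norm_add_le _ _).trans (add_le_add ?_ ?_) <;> rw [norm_smul, Real.norm_eq_abs]
    · exact mul_le_mul (hCf x) (hCg' x) (norm_nonneg _) hCf0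
    · exact mul_le_mul (hCg x) (hCf' x) (norm_nonneg _) hCg0

lemma boundedC1_of_deriv {s : ℝ → ℝ} (hs : ContDiff ℝ 1 s) {C C' : ℝ} (hC : ∀ t, |s t| ≤ C)
    (hC' : ∀ t, |deriv s t| ≤ C') : BoundedC1 s :=
  ⟨hs, ⟨C, hC⟩, ⟨C', fun t => by rw [← norm_deriv_eq_norm_fderiv]; exact hC' t⟩⟩

end BoundedC1

section DirectionalDerivative

open scoped BoundedContinuousFunction

variable {F : Type*} [NormedAddCommGroup F] [NormedSpace ℝ F]

lemma dirDeriv_eq_fderiv {u : F → ℝ} {z : F} (hu : DifferentiableAt ℝ u z) (v : F) :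
    dirDeriv u v z = fderiv ℝ u z v := by
  have hline : HasDerivAt (fun s : ℝ => z + s • v) v 0 := by
    simpa using ((hasDerivAt_id (0 : ℝ)).smul_const v).const_add z
  have hu' : HasFDerivAt u (fderiv ℝ u z) (z + (0 : ℝ) • v) := by
    simpa using hu.hasFDerivAt
  exact (hu'.comp_hasDerivAt 0 hline).deriv

lemma BoundedC1.exists_bcf_eq {u : F → ℝ} (hu : BoundedC1 u) : ∃ g : F →ᵇ ℝ, ⇑g = u := by
  obtain ⟨hu, ⟨C, hC⟩, -⟩ := hu
  exact ⟨.ofNormedAddCommGroup u hu.continuous C hC, rfl⟩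

lemma BoundedC1.exists_bcf_eq_dirDeriv {u : F → ℝ} (hu : BoundedC1 u) (v : F) :
    ∃ g : F →ᵇ ℝ, ⇑g = dirDeriv u v := by
  obtain ⟨hu, -, ⟨C, hC⟩⟩ := hu
  have hdiff := hu.differentiable one_ne_zero
  refine ⟨.ofNormedAddCommGroup (fun z => fderiv ℝ u z v)
    ((hu.continuous_fderiv one_ne_zero).clm_apply continuous_const) (C * ‖v‖)
    fun z => (fderiv ℝ u z).le_of_opNorm_le (hC z) v, funext fun z => ?_⟩
  exact (dirDeriv_eq_fderiv (hdiff z) v).symm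

lemma BoundedC1.dirDeriv_mul {u w : F → ℝ} (hu : BoundedC1 u) (hw : BoundedC1 w) (v z : F) :
    dirDeriv (fun z => u z * w z) v z = u z * dirDeriv w v z + w z * dirDeriv u v z := by
  have hdu := hu.1.differentiable one_ne_zero z
  have hdw := hw.1.differentiable one_ne_zero z
  rw [dirDeriv_eq_fderiv (hdu.fun_mul hdw), dirDeriv_eq_fderiv hdu, dirDeriv_eq_fderiv hdw,
    fderiv_fun_mul hdu hdw]
  simp

end DirectionalDerivative

section CylinderFunctions

variable {E : Type*} [NormedAddCommGroup E] [NormedSpace ℝ E]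

lemma mem_FCb1_iff {u : E → ℝ} :
    u ∈ FCb1 E ↔ ∃ (m : ℕ) (L : E →L[ℝ] (Fin m → ℝ)) (f : (Fin m → ℝ) → ℝ),
      BoundedC1 f ∧ u = f ∘ L := by
  constructor
  · rintro ⟨m, l, f, hf, hb, hd, hu⟩
    exact ⟨m, ContinuousLinearMap.pi l, f, ⟨hf, hb, hd⟩, funext hu⟩
  · rintro ⟨m, L, f, ⟨hf, hb, hd⟩, rfl⟩
    exact ⟨m, fun i => (ContinuousLinearMap.proj i).comp L, f, hf, hb, hd, fun z => rfl⟩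

lemma BoundedC1.of_mem_FCb1 {u : E → ℝ} (hu : u ∈ FCb1 E) : BoundedC1 u := by
  obtain ⟨m, L, f, hf, rfl⟩ := mem_FCb1_iff.1 hu
  exact hf.comp_clm L

lemma FCb1.comp_clm_mem {s : ℝ → ℝ} (hs : BoundedC1 s) (l : E →L[ℝ] ℝ) :
    (fun z => s (l z)) ∈ FCb1 E :=
  mem_FCb1_iff.2 ⟨1, .pi fun _ => l, s ∘ ContinuousLinearMap.proj (0 : Fin 1), hs.comp_clm _, rfl⟩

lemma FCb1.mul_mem {u w : E → ℝ} (hu : u ∈ FCb1 E) (hw : w ∈ FCb1 E) :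
    (fun z => u z * w z) ∈ FCb1 E := by
  obtain ⟨m, L, f, hf, rfl⟩ := mem_FCb1_iff.1 hu
  obtain ⟨n, M, g, hg, rfl⟩ := mem_FCb1_iff.1 hw
  let K : E →L[ℝ] (Fin (m + n) → ℝ) := .pi <|
    Fin.append (fun i => (ContinuousLinearMap.proj i).comp L)
      (fun i => (ContinuousLinearMap.proj i).comp M)
  let P : (Fin (m + n) → ℝ) →L[ℝ] (Fin m → ℝ) := .pi fun i => .proj (Fin.castAdd n i)
  let P' : (Fin (m + n) → ℝ) →L[ℝ] (Fin n → ℝ) := .pi fun i => .proj (Fin.natAdd m i)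
  refine mem_FCb1_iff.2 ⟨m + n, K, _, (hf.comp_clm P).mul (hg.comp_clm P'), ?_⟩
  ext z
  simp [K, P, P']

end CylinderFunctions

section Integration

open scoped BoundedContinuousFunction

lemma BoundedContinuousFunction.integrable_mul {X : Type*} [TopologicalSpace X]
    [MeasurableSpace X] [OpensMeasurableSpace X] {μ : Measure X} (g : X →ᵇ ℝ) {f : X → ℝ}
    (hf : Integrable f μ) : Integrable (fun z => g z * f z) μ :=
  hf.bdd_mul g.continuous.aestronglyMeasurable (ae_of_all _ g.norm_coe_le_norm)

variable {E : Type*} [NormedAddCommGroup E] [NormedSpace ℝ E] [MeasurableSpace E]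
  [BorelSpace E]

/-- Integration by parts against the logarithmic derivative: `D*(g v) = -∂g/∂v - g β_v`. -/
lemma exists_integral_mul_eq_integral_mul_dirDeriv {μ : Measure E} [IsFiniteMeasure μ]
    {v : E} {βv : E → ℝ} (hβ : IsLogDeriv μ v βv) {g : E → ℝ} (hg : g ∈ FCb1 E) :
    ∃ ψ : E → ℝ, Integrable ψ μ ∧
      ∀ f ∈ FCb1 E, ∫ z, ψ z * f z ∂μ = ∫ z, g z * dirDeriv f v z ∂μ := by
  have hg' := BoundedC1.of_mem_FCb1 hg
  obtain ⟨G, hG⟩ := hg'.exists_bcf_eq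
  obtain ⟨Dg, hDg⟩ := hg'.exists_bcf_eq_dirDeriv v
  refine ⟨fun z => -(dirDeriv g v z + g z * βv z), ?_, fun f hf => ?_⟩
  · rw [← hDg, ← hG]
    exact ((Dg.integrable μ).add (G.integrable_mul hβ.1)).neg
  have hf' := BoundedC1.of_mem_FCb1 hf
  obtain ⟨F, hF⟩ := hf'.exists_bcf_eq
  obtain ⟨Df, hDf⟩ := hf'.exists_bcf_eq_dirDeriv v
  have hfDg : Integrable (fun z => f z * dirDeriv g v z) μ := by
    rw [← hF, ← hDg]; exact F.integrable_mul (Dg.integrable μ)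
  have hgDf : Integrable (fun z => g z * dirDeriv f v z) μ := by
    rw [← hG, ← hDf]; exact G.integrable_mul (Df.integrable μ)
  have hfgβ : Integrable (fun z => f z * g z * βv z) μ := by
    rw [← hF, ← hG]; exact (F * G).integrable_mul hβ.1
  have hparts := hβ.2 _ (FCb1.mul_mem hf hg)
  simp only [hf'.dirDeriv_mul hg'] at hparts
  rw [integral_add hfDg hgDf] at hparts
  have hψf : ∫ z, -(dirDeriv g v z + g z * βv z) * f z ∂μ
      = -∫ z, f z * dirDeriv g v z ∂μ - ∫ z, f z * g z * βv z ∂μ := by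
    rw [← integral_neg, ← integral_sub hfDg.fun_neg hfgβ]
    congr 1 with z
    ring
  linarith

end Integration

section MeasureDetermination

variable {E : Type*} [NormedAddCommGroup E] [NormedSpace ℝ E] [MeasurableSpace E]
  [BorelSpace E]

lemma boundedC1_cos : BoundedC1 Real.cos :=
  boundedC1_of_deriv Real.contDiff_cos Real.abs_cos_le_one fun t => by
    simpa using Real.abs_sin_le_one t

lemma boundedC1_sin : BoundedC1 Real.sin :=
  boundedC1_of_deriv Real.contDiff_sin Real.abs_sin_le_one fun t => by
    simpa using Real.abs_cos_le_one t

lemma FCb1.integrable_mul {μ : Measure E} {u f : E → ℝ} (hu : u ∈ FCb1 E)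
    (hf : Integrable f μ) : Integrable (fun z => u z * f z) μ := by
  obtain ⟨g, rfl⟩ := (BoundedC1.of_mem_FCb1 hu).exists_bcf_eq
  exact g.integrable_mul hf

lemma FCb1.integrable {u : E → ℝ} (hu : u ∈ FCb1 E) (μ : Measure E) [IsFiniteMeasure μ] :
    Integrable u μ := by
  obtain ⟨g, rfl⟩ := (BoundedC1.of_mem_FCb1 hu).exists_bcf_eq
  exact g.integrable μ

lemma charFunDual_eq_integral_cos_add (μ : Measure E) [IsFiniteMeasure μ] (L : StrongDual ℝ E) :
    charFunDual μ L = ∫ z, Real.cos (L z) ∂μ + (∫ z, Real.sin (L z) ∂μ) * Complex.I := by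
  have hcos := FCb1.integrable (FCb1.comp_clm_mem boundedC1_cos L) μ
  have hsin := FCb1.integrable (FCb1.comp_clm_mem boundedC1_sin L) μ
  simp_rw [charFunDual_apply, Complex.exp_mul_I, ← Complex.ofReal_cos, ← Complex.ofReal_sin]
  rw [integral_add hcos.ofReal (hsin.ofReal.mul_const _), integral_mul_const,
    integral_complex_ofReal, integral_complex_ofReal]

variable [CompleteSpace E] [SecondCountableTopology E]

/-- Via characteristic functionals: `cos ∘ L` and `sin ∘ L` are cylinder functions. -/
lemma ext_of_forall_FCb1_integral_eq {m m' : Measure E} [IsFiniteMeasure m] [IsFiniteMeasure m']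
    (h : ∀ g ∈ FCb1 E, ∫ z, g z ∂m = ∫ z, g z ∂m') : m = m' :=
  Measure.ext_of_charFunDual <| funext fun L => by
    rw [charFunDual_eq_integral_cos_add, charFunDual_eq_integral_cos_add,
      h _ (FCb1.comp_clm_mem boundedC1_cos L), h _ (FCb1.comp_clm_mem boundedC1_sin L)]

lemma ae_eq_zero_of_forall_FCb1_integral_mul_eq_zero {ν : Measure E} [IsFiniteMeasure ν]
    {h : E → ℝ} (hh : Integrable h ν) (horth : ∀ g ∈ FCb1 E, ∫ z, g z * h z ∂ν = 0) :
    h =ᵐ[ν] 0 := by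
  have : IsFiniteMeasure (ν.withDensity fun z => ENNReal.ofReal (h z)) :=
    isFiniteMeasure_withDensity_ofReal hh.2
  have : IsFiniteMeasure (ν.withDensity fun z => ENNReal.ofReal (-h z)) :=
    isFiniteMeasure_withDensity_ofReal hh.neg.2
  have hmeas : AEMeasurable h ν := hh.1.aemeasurable
  have hmeas' : AEMeasurable (fun z => -h z) ν := hmeas.neg
  have hparts : ν.withDensity (fun z => ENNReal.ofReal (h z))
      = ν.withDensity (fun z => ENNReal.ofReal (-h z)) := by
    refine ext_of_forall_FCb1_integral_eq fun g hg => ?_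
    rw [integral_withDensity_eq_integral_toReal_smul₀ hmeas.ennreal_ofReal
        (ae_of_all _ fun _ => ENNReal.ofReal_lt_top),
      integral_withDensity_eq_integral_toReal_smul₀ hmeas'.ennreal_ofReal
        (ae_of_all _ fun _ => ENNReal.ofReal_lt_top)]
    simp only [ENNReal.toReal_ofReal', smul_eq_mul, mul_comm _ (g _)]
    rw [← sub_eq_zero, ← integral_sub (FCb1.integrable_mul hg hh.pos_part)
      (FCb1.integrable_mul hg (μ := ν) (f := fun z => max (-h z) 0) hh.neg.pos_part)]
    simp_rw [← mul_sub, max_zero_sub_max_neg_zero_eq_self]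
    exact horth g hg
  filter_upwards [(withDensity_eq_iff_of_sigmaFinite hmeas.ennreal_ofReal
    hmeas'.ennreal_ofReal).1 hparts] with z hz
  have := congrArg ENNReal.toReal hz
  rw [ENNReal.toReal_ofReal', ENNReal.toReal_ofReal'] at this
  rw [Pi.zero_apply, ← max_zero_sub_max_neg_zero_eq_self (h z), this, sub_self]

lemma toReal_rnDeriv_mul_ae_eq_of_forall_FCb1 {ν ν' : Measure E} [IsFiniteMeasure ν]
    [IsFiniteMeasure ν'] {f f' : E → ℝ} (hf : Integrable f ν) (hf' : Integrable f' ν')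
    (h : ∀ g ∈ FCb1 E, ∫ z, g z * f z ∂ν = ∫ z, g z * f' z ∂ν') :
    (fun z => (ν.rnDeriv (ν + ν') z).toReal * f z)
      =ᵐ[ν + ν'] fun z => (ν'.rnDeriv (ν + ν') z).toReal * f' z := by
  have hν : ν ≪ ν + ν' := Measure.AbsolutelyContinuous.rfl.add_right ν'
  have hν' : ν' ≪ ν + ν' := Measure.AbsolutelyContinuous.rfl.add_right' ν
  have hF := (integrable_toReal_rnDeriv_mul_iff hν).2 hf
  have hF' := (integrable_toReal_rnDeriv_mul_iff hν').2 hf'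
  rw [← sub_ae_eq_zero]
  refine ae_eq_zero_of_forall_FCb1_integral_mul_eq_zero (hF.sub hF') fun g hg => ?_
  have hmove : ∀ p f : E → ℝ, (fun z => g z * (p z * f z)) = fun z => p z * (g z * f z) :=
    fun _ _ => funext fun _ => mul_left_comm _ _ _
  simp only [Pi.sub_apply, mul_sub]
  rw [integral_sub (FCb1.integrable_mul hg hF) (FCb1.integrable_mul hg hF'), hmove, hmove,
    integral_toReal_rnDeriv_mul hν, integral_toReal_rnDeriv_mul hν', h g hg, sub_self]

end MeasureDetermination

section UnitDensities

lemma abs_le_one_of_normH1starSq_eq_one {b : ℕ → ℝ} (hb : normH1starSq b = 1) (j : ℕ) :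
    |b j| ≤ 1 := by
  have hsum : Summable fun j => b j ^ 2 := by
    by_contra hns
    rw [normH1starSq, tsum_eq_zero_of_not_summable hns] at hb
    exact zero_ne_one hb
  rw [← sq_le_one_iff_abs_le_one, ← hb]
  exact hsum.le_tsum j fun _ _ => sq_nonneg _

lemma normH1starSq_const_mul {P : ℝ} {b : ℕ → ℝ} (hb : P ≠ 0 → normH1starSq b = 1) :
    normH1starSq (fun j => P * b j) = P ^ 2 := by
  simp_rw [normH1starSq, mul_pow]
  rw [tsum_mul_left]
  by_cases hP : P = 0
  · simp [hP]
  · rw [← normH1starSq, hb hP, mul_one]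

lemma eq_of_mul_eq_of_normH1starSq_eq_one {P Q : ℝ} (hP : 0 ≤ P) (hQ : 0 ≤ Q) {a b : ℕ → ℝ}
    (ha : P ≠ 0 → normH1starSq a = 1) (hb : Q ≠ 0 → normH1starSq b = 1)
    (h : ∀ j, P * a j = Q * b j) : P = Q ∧ (P ≠ 0 → a = b) := by
  have hPQ : P = Q := by
    have hsq := normH1starSq_const_mul ha
    rw [funext h, normH1starSq_const_mul hb] at hsq
    exact (pow_left_inj₀ hP hQ two_ne_zero).1 hsq.symm
  subst hPQ
  exact ⟨rfl, fun hP0 => funext fun j => mul_left_cancel₀ hP0 (h j)⟩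

variable {E : Type*} [NormedAddCommGroup E] [NormedSpace ℝ E] [MeasurableSpace E]
  [BorelSpace E] [CompleteSpace E] [SecondCountableTopology E]

/-- Uniqueness of the polar decomposition of the vector measure `a ν`. -/
theorem eq_and_ae_eq_of_forall_FCb1_integral_mul_eq {ν ν' : Measure E} [IsFiniteMeasure ν]
    [IsFiniteMeasure ν'] {a b : E → ℕ → ℝ} (ha : ∀ j, Measurable fun z => a z j)
    (hb : ∀ j, Measurable fun z => b z j) (ha1 : ∀ᵐ z ∂ν, normH1starSq (a z) = 1)
    (hb1 : ∀ᵐ z ∂ν', normH1starSq (b z) = 1)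
    (h : ∀ j, ∀ g ∈ FCb1 E, ∫ z, g z * a z j ∂ν = ∫ z, g z * b z j ∂ν') :
    ν = ν' ∧ ∀ᵐ z ∂ν, a z = b z := by
  have hint : ∀ {m : Measure E} [IsFiniteMeasure m] {x : E → ℕ → ℝ},
      (∀ j, Measurable fun z => x z j) → (∀ᵐ z ∂m, normH1starSq (x z) = 1) →
      ∀ j, Integrable (fun z => x z j) m := fun hx hx1 j =>
    .of_bound (hx j).aestronglyMeasurable 1
      (hx1.mono fun _ hz => abs_le_one_of_normH1starSq_eq_one hz j)
  set κ := ν + ν'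
  have hν : ν ≪ κ := Measure.AbsolutelyContinuous.rfl.add_right ν'
  have hν' : ν' ≪ κ := Measure.AbsolutelyContinuous.rfl.add_right' ν
  have hdens := fun j => toReal_rnDeriv_mul_ae_eq_of_forall_FCb1
    (hint ha ha1 j) (hint hb hb1 j) (h j)
  rw [← Measure.withDensity_rnDeriv_eq ν κ hν,
    ae_withDensity_iff (Measure.measurable_rnDeriv _ _)] at ha1
  rw [← Measure.withDensity_rnDeriv_eq ν' κ hν',
    ae_withDensity_iff (Measure.measurable_rnDeriv _ _)] at hb1
  have hpt : ∀ᵐ z ∂κ, ν.rnDeriv κ z = ν'.rnDeriv κ z ∧ (ν.rnDeriv κ z ≠ 0 → a z = b z) := by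
    filter_upwards [ae_all_iff.2 hdens, ha1, hb1, Measure.rnDeriv_lt_top ν κ,
      Measure.rnDeriv_lt_top ν' κ] with z hz hunit hunit' hp hq
    obtain ⟨hpq, hab⟩ := eq_of_mul_eq_of_normH1starSq_eq_one ENNReal.toReal_nonneg
      ENNReal.toReal_nonneg (fun hp0 => hunit (ENNReal.toReal_ne_zero.1 hp0).1)
      (fun hq0 => hunit' (ENNReal.toReal_ne_zero.1 hq0).1) hz
    exact ⟨(ENNReal.toReal_eq_toReal_iff' hp.ne hq.ne).1 hpq,
      fun hp0 => hab (ENNReal.toReal_ne_zero.2 ⟨hp0, hp.ne⟩)⟩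
  constructor
  · calc ν = κ.withDensity (ν.rnDeriv κ) := (Measure.withDensity_rnDeriv_eq ν κ hν).symm
      _ = κ.withDensity (ν'.rnDeriv κ) := withDensity_congr_ae (hpt.mono fun _ hz => hz.1)
      _ = ν' := Measure.withDensity_rnDeriv_eq ν' κ hν'
  · rw [← Measure.withDensity_rnDeriv_eq ν κ hν,
      ae_withDensity_iff (Measure.measurable_rnDeriv _ _)]
    exact hpt.mono fun _ hz => hz.2

end UnitDensities

section OrthonormalBasis

variable {H : Type*} [NormedAddCommGroup H] [InnerProductSpace ℝ H] {e : ℕ → H}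

lemma memH1_of_orthonormal (he : Orthonormal ℝ e) (c : ℕ → ℝ) (j : ℕ) : memH1 c e (e j) :=
  (hasSum_single j fun k hk => by simp [he.inner_eq_zero (Ne.symm hk)]).summable

lemma pairH1_smul_of_orthonormal (he : Orthonormal ℝ e) (c : ℕ → ℝ) (j : ℕ) (r : ℝ)
    (b : ℕ → ℝ) : pairH1 c e (r • e j) b = b j * (c j * r) := by
  rw [pairH1, tsum_eq_single j fun k hk => by
    simp [real_inner_smul_left, he.inner_eq_zero (Ne.symm hk)]]
  simp [real_inner_smul_left, he.1 j]

variable {E : Type*} [NormedAddCommGroup E] [NormedSpace ℝ E] [MeasurableSpace E]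
  {μ : Measure E} {ι : H →L[ℝ] E} {Q sqrtQ : H →L[ℝ] H} {lam : ℕ → ℝ} {β : H → E → ℝ}

/-- `e j = Q^{1/2} (λ_j⁻¹ Q^{1/2} e j)`. -/
lemma Hyp22.basis_mem_range_sqrtQ (hyp : Hyp22 μ ι Q sqrtQ e lam β) (j : ℕ) :
    e j ∈ Set.range sqrtQ :=
  ⟨(lam j)⁻¹ • sqrtQ (e j), by
    rw [map_smul, hyp.sqrtQ_sq, hyp.eigen, smul_smul, inv_mul_cancel₀ (hyp.lam_pos j).ne',
      one_smul]⟩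

end OrthonormalBasis

theorem stmt3_general {E H : Type*} [NormedAddCommGroup E] [NormedSpace ℝ E] [CompleteSpace E]
    [SecondCountableTopology E] [MeasurableSpace E] [BorelSpace E]
    [NormedAddCommGroup H] [InnerProductSpace ℝ H]
    (μ : Measure E) [IsFiniteMeasure μ]
    (ι : H →L[ℝ] E)
    (Q sqrtQ : H →L[ℝ] H) (e : ℕ → H) (lam : ℕ → ℝ) (β : H → E → ℝ)
    (hyp : Hyp22 μ ι Q sqrtQ e lam β)
    (c : ℕ → ℝ) (hc : ∀ j, 1 ≤ c j)
    (ρ : E → ℝ)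
    (dρ dρ' : Measure E) [IsFiniteMeasure dρ] [IsFiniteMeasure dρ']
    (σ σ' : E → ℕ → ℝ)
    (hσmeas : ∀ j, Measurable fun z => σ z j) (hσ'meas : ∀ j, Measurable fun z => σ' z j)
    (hσnorm : ∀ᵐ z ∂dρ, normH1starSq (σ z) = 1)
    (hσ'norm : ∀ᵐ z ∂dρ', normH1starSq (σ' z) = 1)
    (hrepr : ∀ (m : ℕ) (g : Fin m → E → ℝ) (lv : Fin m → H) (ψ : E → ℝ),
      (∀ j, g j ∈ FCb1 E) → (∀ j, lv j ∈ Set.range sqrtQ) → (∀ j, memH1 c e (lv j)) →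
      IsDstar μ ι g lv ψ →
      ∫ z, ψ z * ρ z ∂μ = ∫ z, pairH1 c e (∑ j, g j z • lv j) (σ z) ∂dρ)
    (hrepr' : ∀ (m : ℕ) (g : Fin m → E → ℝ) (lv : Fin m → H) (ψ : E → ℝ),
      (∀ j, g j ∈ FCb1 E) → (∀ j, lv j ∈ Set.range sqrtQ) → (∀ j, memH1 c e (lv j)) →
      IsDstar μ ι g lv ψ →
      ∫ z, ψ z * ρ z ∂μ = ∫ z, pairH1 c e (∑ j, g j z • lv j) (σ' z) ∂dρ') :
    dρ = dρ' ∧ ∀ᵐ z ∂dρ, σ z = σ' z := by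
  have hcoord : ∀ j, ∀ g ∈ FCb1 E, ∫ z, g z * σ z j ∂dρ = ∫ z, g z * σ' z j ∂dρ' := by
    intro j g hg
    have hej := hyp.basis_mem_range_sqrtQ j
    obtain ⟨ψ, hψ, hψf⟩ := exists_integral_mul_eq_integral_mul_dirDeriv (hyp.logDeriv _ hej) hg
    have hDstar : IsDstar μ ι (fun _ : Fin 1 => g) (fun _ => e j) ψ := ⟨hψ, by simpa using hψf⟩
    have h := (hrepr 1 _ _ ψ (fun _ => hg) (fun _ => hej)
      (fun _ => memH1_of_orthonormal hyp.ortho c j) hDstar).symm.trans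
      (hrepr' 1 _ _ ψ (fun _ => hg) (fun _ => hej)
        (fun _ => memH1_of_orthonormal hyp.ortho c j) hDstar)
    simp only [Fin.sum_univ_one, pairH1_smul_of_orthonormal hyp.ortho] at h
    simp_rw [mul_left_comm _ (c j), integral_const_mul, mul_comm (σ _ j), mul_comm (σ' _ j)] at h
    exact mul_left_cancel₀ (one_pos.trans_le (hc j)).ne' h
  exact eq_and_ae_eq_of_forall_FCb1_integral_mul_eq hσmeas hσ'meas hσnorm hσ'norm hcoord

/-- Theorem 3.2 (ii), uniqueness of `‖dρ‖` and `σ_ρ`. Elements of `H₁*` are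
represented by their coefficient sequences with respect to the orthonormal basis `{c_j e_j}`
of `H₁*`. -/
theorem stmt3 {E H : Type*} [NormedAddCommGroup E] [NormedSpace ℝ E] [CompleteSpace E]
    [SecondCountableTopology E] [MeasurableSpace E] [BorelSpace E]
    [NormedAddCommGroup H] [InnerProductSpace ℝ H] [CompleteSpace H]
    [SecondCountableTopology H]
    (μ : Measure E) [IsFiniteMeasure μ] (hμ0 : μ ≠ 0)
    (ι : H →L[ℝ] E) (hinj : Function.Injective ι) (hdense : DenseRange ι)
    (Q sqrtQ : H →L[ℝ] H) (e : ℕ → H) (lam : ℕ → ℝ) (β : H → E → ℝ)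
    (hyp : Hyp22 μ ι Q sqrtQ e lam β)
    (c : ℕ → ℝ) (hc : ∀ j, 1 ≤ c j)
    (ρ : E → ℝ) (hρmeas : Measurable ρ) (hρnn : ∀ z, 0 ≤ ρ z)
    (hρBV : IsBV μ ι sqrtQ c e ρ)
    (dρ dρ' : Measure E) [IsFiniteMeasure dρ] [IsFiniteMeasure dρ']
    (σ σ' : E → ℕ → ℝ)
    (hσmeas : ∀ j, Measurable fun z => σ z j) (hσ'meas : ∀ j, Measurable fun z => σ' z j)
    (hσnorm : ∀ᵐ z ∂dρ, normH1starSq (σ z) = 1)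
    (hσ'norm : ∀ᵐ z ∂dρ', normH1starSq (σ' z) = 1)
    (hrepr : ∀ (m : ℕ) (g : Fin m → E → ℝ) (lv : Fin m → H) (ψ : E → ℝ),
      (∀ j, g j ∈ FCb1 E) → (∀ j, lv j ∈ Set.range sqrtQ) → (∀ j, memH1 c e (lv j)) →
      IsDstar μ ι g lv ψ →
      ∫ z, ψ z * ρ z ∂μ = ∫ z, pairH1 c e (∑ j, g j z • lv j) (σ z) ∂dρ)
    (hrepr' : ∀ (m : ℕ) (g : Fin m → E → ℝ) (lv : Fin m → H) (ψ : E → ℝ),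
      (∀ j, g j ∈ FCb1 E) → (∀ j, lv j ∈ Set.range sqrtQ) → (∀ j, memH1 c e (lv j)) →
      IsDstar μ ι g lv ψ →
      ∫ z, ψ z * ρ z ∂μ = ∫ z, pairH1 c e (∑ j, g j z • lv j) (σ' z) ∂dρ') :
    dρ = dρ' ∧ ∀ᵐ z ∂dρ, σ z = σ' z :=
  stmt3_general μ ι Q sqrtQ e lam β hyp c hc ρ dρ dρ' σ σ' hσmeas hσ'meas hσnorm hσ'norm hrepr
    hrepr'

end
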